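/- arXiv:1410.0191 — 3 statements merged into one kernel-verified Lean document; each statement's English description precedes it below -/
import Mathlib

section
/- The quadratic Toda bracket π₂, defined on coordinates (a_1,…,a_{N-1}, b_1,…,b_N) by {a_i, a_{i+1}} = ½ a_i a_{i+1}, {a_i, b_i} = -a_i b_i, {a_i, b_{i+1}} = a_i b_{i+1}, {b_i, b_{i+1}} = 2 a_i², all other brackets zero, satisfies the Jacobi identity. -/
/-- Index set for Toda variables `(a_1, …, a_{N-1}, b_1, …, b_N)` (0-based). -/
abbrev TodaIdx (N : ℕ) := Fin (N - 1) ⊕ Fin N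

/-- The value of the `a`-variable with (0-based) index `m`, zero out of range. -/
noncomputable def av {N : ℕ} (x : TodaIdx N → ℝ) (m : ℕ) : ℝ :=
  if h : m < N - 1 then x (.inl ⟨m, h⟩) else 0

/-- The value of the `b`-variable with (0-based) index `m`, zero out of range. -/
noncomputable def bv {N : ℕ} (x : TodaIdx N → ℝ) (m : ℕ) : ℝ :=
  if h : m < N then x (.inr ⟨m, h⟩) else 0

/-- Structure matrix of the quadratic Toda bracket `π₂`:
`{a_i, a_{i+1}} = ½ a_i a_{i+1}`, `{a_i, b_i} = -a_i b_i`,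
`{a_i, b_{i+1}} = a_i b_{i+1}`, `{b_i, b_{i+1}} = 2 a_i²`,
all other coordinate brackets zero. -/
noncomputable def quadP (N : ℕ) : TodaIdx N → TodaIdx N → (TodaIdx N → ℝ) → ℝ
  | .inl i, .inl j, x =>
      if (j : ℕ) = (i : ℕ) + 1 then (1/2) * av x i * av x j
      else if (i : ℕ) = (j : ℕ) + 1 then -((1/2) * av x j * av x i) else 0
  | .inl i, .inr j, x =>
      if (j : ℕ) = (i : ℕ) then -(av x i * bv x j)
      else if (j : ℕ) = (i : ℕ) + 1 then av x i * bv x j else 0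
  | .inr j, .inl i, x =>
      -(if (j : ℕ) = (i : ℕ) then -(av x i * bv x j)
        else if (j : ℕ) = (i : ℕ) + 1 then av x i * bv x j else 0)
  | .inr i, .inr j, x =>
      if (j : ℕ) = (i : ℕ) + 1 then 2 * (av x i)^2
      else if (i : ℕ) = (j : ℕ) + 1 then -(2 * (av x j)^2) else 0

/-- Partial derivative in the `s`-th coordinate direction. -/
noncomputable def pd {N : ℕ} (f : (TodaIdx N → ℝ) → ℝ) (s : TodaIdx N) (x : TodaIdx N → ℝ) : ℝ :=
  fderiv ℝ f x (Pi.single s 1)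

/-
Every coordinate bracket of `π₂` is a single quadratic monomial `{x_p, x_q} = c_pq x_r x_r'`.
Hence `∂_s {x_v, x_w}` only sees the two factors, and `∑_s {x_s, x_u} ∂_s {x_v, x_w}` collapses to
`c_vw ({x_r, x_u} x_r' + x_r {x_r', x_u})`. Extending the coordinates by zero beyond the chain
(the bracket of an out-of-range coordinate vanishes as well), the Jacobi identity becomes a
polynomial identity for the semi-infinite chain indexed by `ℕ`, checked by splitting on the
relative positions of the three indices.
-/

theorem ContinuousLinearMap.fderiv_const_mul_mul_apply {𝕜 E : Type*} [NontriviallyNormedField 𝕜]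
    [NormedAddCommGroup E] [NormedSpace 𝕜 E] (c : 𝕜) (ℓ₁ ℓ₂ : E →L[𝕜] 𝕜) (x h : E) :
    fderiv 𝕜 (fun y => c * ℓ₁ y * ℓ₂ y) x h = c * (ℓ₁ h * ℓ₂ x + ℓ₁ x * ℓ₂ h) := by
  rw [((ℓ₁.hasFDerivAt.const_mul c).fun_mul ℓ₂.hasFDerivAt).fderiv]
  simp only [add_apply, smul_apply, smul_eq_mul]
  ring

theorem sum_mul_map_single_eq_map {ι R F : Type*} [Fintype ι] [DecidableEq ι] [CommSemiring R]
    [FunLike F (ι → R) R] [LinearMapClass F R (ι → R) R] (ℓ : F) (f : ι → R) :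
    ∑ s, f s * ℓ (Pi.single s 1) = ℓ f := by
  conv_rhs => rw [pi_eq_sum_univ' f, map_sum]
  simp only [map_smul, smul_eq_mul]

noncomputable section

namespace QuadToda

open Sum

abbrev label {N : ℕ} : TodaIdx N → ℕ ⊕ ℕ := Sum.map Fin.val Fin.val

def coord (N : ℕ) : ℕ ⊕ ℕ → (TodaIdx N → ℝ) →L[ℝ] ℝ
  | inl m => if h : m < N - 1 then .proj (inl ⟨m, h⟩) else 0
  | inr m => if h : m < N then .proj (inr ⟨m, h⟩) else 0

@[simp] theorem coord_inl {N : ℕ} (m : ℕ) (x : TodaIdx N → ℝ) : coord N (inl m) x = av x m := by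
  simp only [coord, av]; split_ifs <;> rfl

@[simp] theorem coord_inr {N : ℕ} (m : ℕ) (x : TodaIdx N → ℝ) : coord N (inr m) x = bv x m := by
  simp only [coord, bv]; split_ifs <;> rfl

def coeff : ℕ ⊕ ℕ → ℕ ⊕ ℕ → ℝ
  | inl i, inl j => if j = i + 1 then 1 / 2 else if i = j + 1 then -(1 / 2) else 0
  | inl i, inr j => if j = i then -1 else if j = i + 1 then 1 else 0
  | inr j, inl i => -(if j = i then -1 else if j = i + 1 then 1 else 0)
  | inr i, inr j => if j = i + 1 then 2 else if i = j + 1 then -2 else 0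

/-- `{b_i, b_j}` is a multiple of `a_(min i j)²`; the index is written with the test `j = i + 1`
of `coeff` so that case splits on the two stay in step. -/
def fstFactor : ℕ ⊕ ℕ → ℕ ⊕ ℕ → ℕ ⊕ ℕ
  | inr i, inr j => inl (if j = i + 1 then i else j)
  | p, _ => p

def sndFactor : ℕ ⊕ ℕ → ℕ ⊕ ℕ → ℕ ⊕ ℕ
  | inr i, inr j => inl (if j = i + 1 then i else j)
  | _, q => q

def bracket (z : ℕ ⊕ ℕ → ℝ) (p q : ℕ ⊕ ℕ) : ℝ :=
  coeff p q * z (fstFactor p q) * z (sndFactor p q)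

def bracketDeriv (z h : ℕ ⊕ ℕ → ℝ) (p q : ℕ ⊕ ℕ) : ℝ :=
  coeff p q * (h (fstFactor p q) * z (sndFactor p q) + z (fstFactor p q) * h (sndFactor p q))

theorem bracketDeriv_jacobi (z : ℕ ⊕ ℕ → ℝ) (u v w : ℕ ⊕ ℕ) :
    bracketDeriv z (bracket z · u) v w + bracketDeriv z (bracket z · v) w u
      + bracketDeriv z (bracket z · w) u v = 0 := by
  rcases u with i | i <;> rcases v with j | j <;> rcases w with k | k <;>
    · simp only [bracketDeriv, bracket, coeff, fstFactor, sndFactor]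
      split_ifs <;> first | (exfalso; omega) | (subst_vars; ring)

theorem quadP_eq_bracket {N : ℕ} (v w : TodaIdx N) (x : TodaIdx N → ℝ) :
    quadP N v w x = bracket (coord N · x) (label v) (label w) := by
  rcases v with i | i <;> rcases w with j | j <;>
    simp only [quadP, bracket, coeff, fstFactor, sndFactor, label, Sum.map_inl, Sum.map_inr,
      coord_inl, coord_inr] <;> split_ifs <;> grind

theorem pd_quadP {N : ℕ} (v w s : TodaIdx N) (x : TodaIdx N → ℝ) :
    pd (quadP N v w) s x
      = bracketDeriv (coord N · x) (coord N · (Pi.single s 1)) (label v) (label w) := by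
  rw [pd, funext (quadP_eq_bracket v w)]
  exact ContinuousLinearMap.fderiv_const_mul_mul_apply _ _ _ _ _

theorem coord_quadP_column {N : ℕ} (r : ℕ ⊕ ℕ) (u : TodaIdx N) (x : TodaIdx N → ℝ) :
    coord N r (quadP N · u x) = bracket (coord N · x) r (label u) := by
  rcases r with m | m
  · by_cases hm : m < N - 1
    · simp [coord, hm, quadP_eq_bracket]
    · rcases u with j | j <;> simp [bracket, fstFactor, av, hm]
  · by_cases hm : m < N
    · simp [coord, hm, quadP_eq_bracket]
    · rcases u with j | j
      · simp [bracket, fstFactor, bv, hm]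
      · simp only [coord_inr, bv, hm, dite_false, bracket, coeff, fstFactor, sndFactor, label,
          Sum.map_inr]
        split_ifs
        · simp [av, show ¬m < N - 1 by omega]
        · simp [av, show ¬(j : ℕ) < N - 1 by omega]
        · simp

theorem sum_quadP_mul_pd {N : ℕ} (u v w : TodaIdx N) (x : TodaIdx N → ℝ) :
    ∑ s, quadP N s u x * pd (quadP N v w) s x
      = bracketDeriv (coord N · x) (bracket (coord N · x) · (label u)) (label v) (label w) := by
  rw [bracketDeriv, ← coord_quadP_column, ← coord_quadP_column,
    ← sum_mul_map_single_eq_map _ (quadP N · u x),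
    ← sum_mul_map_single_eq_map (coord N (sndFactor _ _)) (quadP N · u x)]
  simp only [pd_quadP, bracketDeriv, Finset.sum_mul, Finset.mul_sum, ← Finset.sum_add_distrib]
  exact Finset.sum_congr rfl fun s _ => by ring

end QuadToda

end

/-- The quadratic Toda bracket `π₂` satisfies the Jacobi identity. -/
theorem quadToda_jacobi (N : ℕ) (x : TodaIdx N → ℝ) (u v w : TodaIdx N) :
    ∑ s : TodaIdx N, (quadP N s u x * pd (quadP N v w) s x
      + quadP N s v x * pd (quadP N w u) s x
      + quadP N s w x * pd (quadP N u v) s x) = 0 := by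
  simp only [Finset.sum_add_distrib, QuadToda.sum_quadP_mul_pd]
  exact QuadToda.bracketDeriv_jacobi _ _ _ _
end

section
/- Suppose the bracket relations of Theorem 6 hold: X₁(H_l) = (l+1) H_{l+1} and [X₁, χ_l^n] = (n−3) χ_l^{n+1} + (l+1) χ_{l+1}^n, where χ_l^n denotes the Hamiltonian vector field of H_l with respect to the n-th bracket. Then if χ_l^{n} = χ_{l+1}^{n-1} holds at level n−1 for all l, the Lenard relation χ_l^{n+1} = χ_{l+1}^n holds at level n (for n ≠ 3). -/
/-- The Lenard-relation induction step (Proposition 2 of the paper).  In the Lie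
algebra `V` of vector fields, suppose `X₁` satisfies `X₁(H_l) = (l+1) H_{l+1}`
(`act` is the action of vector fields on the functions `H_l`) and the commutator
formula `[X₁, χ_l^n] = (n−3) χ_l^{n+1} + (l+1) χ_{l+1}^n`, where `χ l n` is the
Hamiltonian vector field of `H_l` with respect to the `n`-th bracket.  If the
Lenard relation `χ_l^n = χ_{l+1}^{n-1}` holds at level `n − 1` for all `l`,
then (for `n ≠ 3`) it holds at level `n`: `χ_l^{n+1} = χ_{l+1}^n`. -/
theorem lenard_induction_step {V : Type*} [LieRing V] [LieAlgebra ℝ V]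
    {F : Type*} [AddCommGroup F] [Module ℝ F]
    (act : V → F → F) (H : ℕ → F) (X₁ : V) (χ : ℕ → ℕ → V)
    (hH : ∀ l, act X₁ (H l) = ((l : ℝ) + 1) • H (l + 1))
    (hcomm : ∀ l n, ⁅X₁, χ l n⁆ =
      ((n : ℝ) - 3) • χ l (n + 1) + ((l : ℝ) + 1) • χ (l + 1) n)
    (n : ℕ) (hn1 : 1 ≤ n) (hn3 : (n : ℝ) ≠ 3)
    (hind : ∀ l, χ l n = χ (l + 1) (n - 1)) :
    ∀ l, χ l (n + 1) = χ (l + 1) n := by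
  intro l
  obtain ⟨m, rfl⟩ : ∃ m, n = m + 1 := ⟨n - 1, (Nat.succ_pred_eq_of_pos hn1).symm⟩
  have h1 : ⁅X₁, χ l (m + 1)⁆ = ⁅X₁, χ (l + 1) m⁆ := by
    rw [hind l]; norm_num
  rw [hcomm, hcomm] at h1
  have h2 : χ (l + 1) (m + 1) = χ (l + 2) m := by
    have := hind (l + 1); simpa using this
  rw [h2] at h1
  push_cast at h1 hn3 ⊢
  -- h1 : (m+1-3) • χ l (m+2) + (l+1) • χ(l+1)(m+1) = (m-3) • χ(l+1)(m+1) + (l+1+1) • χ(l+2)m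
  have h3 : χ (l + 1) (m + 1) = χ (l + 2) m := h2
  rw [← h3] at h1
  have key : ((m : ℝ) + 1 - 3) • χ l (m + 1 + 1) = ((m : ℝ) + 1 - 3) • χ (l + 1) (m + 1) := by
    have := h1
    have e : ((m : ℝ) - 3) • χ (l+1) (m+1) + ((l : ℝ) + 1 + 1) • χ (l+1) (m+1)
        = ((m : ℝ) + 1 - 3) • χ (l+1) (m+1) + ((l : ℝ) + 1) • χ (l+1) (m+1) := by
      rw [← add_smul, ← add_smul]; ring_nf
    rw [e] at this
    exact add_right_cancel this
  have hne : ((m : ℝ) + 1 - 3) ≠ 0 := by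
    intro h; apply hn3; linarith
  exact smul_right_injective V hne key
end

section
/- Assume the Lenard relations χ_i^{n+1} = χ_{i+1}^n hold for all i and n ≥ 1, and that {H_1, H_j}_1 = 0 for all j, and X₁ satisfies X₁(H_i) = (i+1)H_{i+1} with [X₁, χ_j^1] = (j+1)χ_{j+1}^1 − 2χ_j^2. Then {H_i, H_j}_n = 0 for all i, j, n: all the Hamiltonians are in involution with respect to every bracket in the hierarchy. -/
/-!
Iterating the Lenard relations reduces every bracket to the first one:
`χ_i^{n} = χ_{i+n-1}^1`, so it suffices that `χ_i^1(H_b) = 0` for all `i ≥ 1`, by induction on `i`.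
The case `i = 1` is assumed. For `i = 2`, antisymmetry and the Lenard relations move the index onto
`H_1`: `χ_2^1(H_b) = χ_1^2(H_b) = -χ_{b+1}^1(H_1) = χ_1^1(H_{b+1}) = 0`. For `i ≥ 2`, evaluating
`[X₁, χ_i^1] = (i+1) χ_{i+1}^1 - 2 χ_i^2` on `H_b` kills the left side, since `X₁` maps `H_b` to a
multiple of `H_{b+1}`, and leaves `(i - 1) χ_{i+1}^1(H_b)` on the right.
-/

section Lenard

variable {α : Type*} {χ : ℕ → ℕ → α}

theorem eq_first_of_lenard (hLenard : ∀ i n, 1 ≤ n → χ i (n + 1) = χ (i + 1) n) (k : ℕ) :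
    ∀ i, χ i (k + 1) = χ (i + k) 1 := by
  induction k with
  | zero => exact fun _ => rfl
  | succ k ih =>
    intro i
    rw [hLenard i (k + 1) k.succ_pos, ih (i + 1), Nat.add_right_comm, Nat.add_assoc]

end Lenard

section Involution

variable {K F : Type*} [Field K] [AddCommGroup F] [Module K F]
  {χ : ℕ → ℕ → Module.End K F} {H : ℕ → F}

theorem apply_two_one_eq_zero (hLenard : ∀ i, χ i 2 = χ (i + 1) 1)
    (hskew : ∀ i j n, χ i n (H j) = - χ j n (H i)) (hbase : ∀ j, χ 1 1 (H j) = 0) (b : ℕ) :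
    χ 2 1 (H b) = 0 := by
  rw [← hLenard 1, hskew, hLenard b, hskew, hbase, neg_neg]

theorem apply_succ_one_eq_zero [CharZero K] {X₁ : Module.End K F} {j : ℕ} (hj : 2 ≤ j)
    (hX : ∀ i, X₁ (H i) = ((i : K) + 1) • H (i + 1))
    (hcomm : ⁅X₁, χ j 1⁆ = ((j : K) + 1) • χ (j + 1) 1 - (2 : K) • χ j 2)
    (hLenard : χ j 2 = χ (j + 1) 1) (hχ : ∀ b, χ j 1 (H b) = 0) (b : ℕ) :
    χ (j + 1) 1 (H b) = 0 := by
  have hlie : ⁅X₁, χ j 1⁆ (H b) = 0 := by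
    rw [Ring.lie_def, LinearMap.sub_apply, Module.End.mul_apply, Module.End.mul_apply, hχ, hX,
      map_zero, map_smul, hχ, smul_zero, sub_zero]
  have hcoeff : ((j : K) + 1) - 2 ≠ 0 := by
    rw [sub_ne_zero]
    exact_mod_cast (show j + 1 ≠ 2 by omega)
  rw [hcomm, hLenard, ← sub_smul, LinearMap.smul_apply] at hlie
  exact (smul_eq_zero.mp hlie).resolve_left hcoeff

theorem apply_one_eq_zero [CharZero K] {X₁ : Module.End K F} (hLenard : ∀ i, χ i 2 = χ (i + 1) 1)
    (hskew : ∀ i j n, χ i n (H j) = - χ j n (H i)) (hbase : ∀ j, χ 1 1 (H j) = 0)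
    (hX : ∀ i, X₁ (H i) = ((i : K) + 1) • H (i + 1))
    (hcomm : ∀ j, ⁅X₁, χ j 1⁆ = ((j : K) + 1) • χ (j + 1) 1 - (2 : K) • χ j 2)
    {i : ℕ} (hi : 1 ≤ i) (b : ℕ) : χ i 1 (H b) = 0 := by
  obtain rfl | htwo := hi.eq_or_lt
  · exact hbase b
  clear hi
  induction i, htwo using Nat.le_induction generalizing b with
  | base => exact apply_two_one_eq_zero hLenard hskew hbase b
  | succ j hj ih => exact apply_succ_one_eq_zero hj hX (hcomm j) (hLenard j) ih b

end Involution

-- Vector fields act as linear operators on the function space `F`; `{H_i, H_j}_n` is `χ i n (H j)`.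
/-- Involutivity of the Toda Hamiltonians in the whole hierarchy of brackets
(Proposition 3 of the paper).  Vector fields are modelled as linear operators on
the space of functions `F`; `χ i n` is the Hamiltonian vector field of `H_i`
with respect to the `n`-th bracket, so that `{H_i, H_j}_n = χ i n (H j)`.
Assume the Lenard relations `χ_i^{n+1} = χ_{i+1}^n`, the antisymmetry
`{H_i, H_j}_n = -{H_j, H_i}_n`, that `H₁` satisfies `{H_1, H_j}_1 = 0`,
`X₁(H_i) = (i+1) H_{i+1}` and `[X₁, χ_j^1] = (j+1) χ_{j+1}^1 − 2 χ_j^2`.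
Then `{H_i, H_j}_n = 0` for all `i, j, n ≥ 1`. -/
theorem toda_hierarchy_involution {F : Type*} [AddCommGroup F] [Module ℝ F]
    (X₁ : Module.End ℝ F) (χ : ℕ → ℕ → Module.End ℝ F) (H : ℕ → F)
    (hLenard : ∀ i n, 1 ≤ n → χ i (n + 1) = χ (i + 1) n)
    (hskew : ∀ i j n, χ i n (H j) = - χ j n (H i))
    (hbase : ∀ j, χ 1 1 (H j) = 0)
    (hX : ∀ i, X₁ (H i) = ((i : ℝ) + 1) • H (i + 1))
    (hcomm : ∀ j, ⁅X₁, χ j 1⁆ = ((j : ℝ) + 1) • χ (j + 1) 1 - (2 : ℝ) • χ j 2) :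
    ∀ i j n, 1 ≤ i → 1 ≤ j → 1 ≤ n → χ i n (H j) = 0 := by
  intro i j n hi _ hn
  obtain ⟨k, rfl⟩ := Nat.exists_eq_add_of_le' hn
  rw [eq_first_of_lenard hLenard k i]
  exact apply_one_eq_zero (fun i => hLenard i 1 le_rfl) hskew hbase hX hcomm
    (hi.trans (Nat.le_add_right i k)) j
end
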